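/- arXiv:1407.5761 — 7 statements merged into one kernel-verified Lean document; each statement's English description precedes it below -/
import Mathlib

section
/- Let X be a compact Hausdorff totally disconnected space and f : X → {0,1} a function such that f can be written as the limit along the filter 𝔉 of a family of continuous functions (f_i) indexed by finite subsets of a cardinal κ (where 𝔉 is the filter generated by the sets {i : i ⊇ j} for finite j ⊆ κ). Then f⁻¹(1) can be written both as a union of at most κ closed sets and as an intersection of at most κ open sets. -/
open Filter Topology

/-! Since `Bool` is discrete, `g i x → f x` means that `g i x = f x` for all `i ⊇ j`, for some
finite `j`. Hence `f⁻¹' {b}` is the union over `j` of the closed sets `⋂ i ⊇ j, g i⁻¹' {b}`;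
taking `b = false` and complements gives the intersection of open sets. There are `|κ|` finite
subsets of the infinite `κ`, so both families can be indexed by `κ`. -/

section EventuallyEq

variable {ι X β : Type*} [Preorder ι] [IsDirectedOrder ι] [Nonempty ι]

theorem preimage_singleton_eq_iUnion_iInter_of_eventually_eq {f : X → β} {g : ι → X → β}
    (h : ∀ x, ∀ᶠ i in atTop, g i x = f x) (b : β) :
    f ⁻¹' {b} = ⋃ j, ⋂ i ≥ j, g i ⁻¹' {b} := by
  ext x
  simp only [Set.mem_preimage, Set.mem_singleton_iff, Set.mem_iUnion, Set.mem_iInter]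
  constructor
  · rintro rfl
    exact eventually_atTop.1 (h x)
  · rintro ⟨j, hj⟩
    obtain ⟨i, hib, hif⟩ := ((eventually_atTop.2 ⟨j, hj⟩).and (h x)).exists
    exact hif ▸ hib

theorem preimage_true_eq_iInter_compl_of_eventually_eq {f : X → Bool} {g : ι → X → Bool}
    (h : ∀ x, ∀ᶠ i in atTop, g i x = f x) :
    f ⁻¹' {true} = ⋂ j, (⋂ i ≥ j, g i ⁻¹' {false})ᶜ := by
  have hcompl : f ⁻¹' {true} = (f ⁻¹' {false})ᶜ := by ext x; simp
  rw [hcompl, preimage_singleton_eq_iUnion_iInter_of_eventually_eq h, Set.compl_iUnion]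

end EventuallyEq

theorem stmt0_general {X : Type*} [TopologicalSpace X] {κ : Type*} [Infinite κ]
    (f : X → Bool) (g : Finset κ → X → Bool)
    (hcont : ∀ i, Continuous (g i))
    (hlim : ∀ x : X, Tendsto (fun i => g i x) atTop (nhds (f x))) :
    (∃ F : κ → Set X, (∀ i, IsClosed (F i)) ∧ f ⁻¹' {true} = ⋃ i, F i) ∧
    (∃ G : κ → Set X, (∀ i, IsOpen (G i)) ∧ f ⁻¹' {true} = ⋂ i, G i) := by
  obtain ⟨e⟩ : Nonempty (κ ≃ Finset κ) :=
    Cardinal.eq.1 (Cardinal.mk_finset_of_infinite κ).symm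
  have hev : ∀ x, ∀ᶠ i in atTop, g i x = f x := fun x =>
    tendsto_pure.1 (nhds_discrete Bool ▸ hlim x)
  have hclosed : ∀ b j, IsClosed (⋂ i ≥ j, g i ⁻¹' {b}) := fun _ _ =>
    isClosed_biInter fun i _ => isClosed_singleton.preimage (hcont i)
  refine ⟨⟨fun k => ⋂ i ≥ e k, g i ⁻¹' {true}, fun k => hclosed _ _, ?_⟩,
    ⟨fun k => (⋂ i ≥ e k, g i ⁻¹' {false})ᶜ, fun k => (hclosed _ _).isOpen_compl, ?_⟩⟩
  · rw [preimage_singleton_eq_iUnion_iInter_of_eventually_eq hev]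
    exact (e.surjective.iUnion_comp _).symm
  · rw [preimage_true_eq_iInter_compl_of_eventually_eq hev]
    exact (e.surjective.iInter_comp _).symm

/-- If `f : X → Bool` on a compact Hausdorff totally disconnected space is the
pointwise limit, along the filter `atTop` on finite subsets of `κ` (the filter generated by the
sets `{i : i ⊇ j}`), of a family of continuous functions, then `f ⁻¹' {true}` is both a union of
at most `κ` closed sets and an intersection of at most `κ` open sets. -/
theorem stmt0 {X : Type*} [TopologicalSpace X] [CompactSpace X] [T2Space X]
    [TotallyDisconnectedSpace X] {κ : Type*} [Infinite κ]
    (f : X → Bool) (g : Finset κ → X → Bool)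
    (hcont : ∀ i, Continuous (g i))
    (hlim : ∀ x : X, Tendsto (fun i => g i x) atTop (nhds (f x))) :
    (∃ F : κ → Set X, (∀ i, IsClosed (F i)) ∧ f ⁻¹' {true} = ⋃ i, F i) ∧
    (∃ G : κ → Set X, (∀ i, IsOpen (G i)) ∧ f ⁻¹' {true} = ⋂ i, G i) :=
  stmt0_general f g hcont hlim
end

section
/- Let X be a compact Hausdorff totally disconnected space with a base of size at most κ, and f : X → {0,1}. If f⁻¹(1) can be written both as a union of at most κ closed sets and as an intersection of at most κ open sets, then f is the limit along the filter 𝔉_κ of a family of continuous {0,1}-valued (indicator of clopen set) functions indexed by 𝔓_{<ω}(κ). -/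
open Filter Topology

/-! For a finite `s ⊆ κ`, take a clopen set between the closed set `⋃ i ∈ s, F i` and the open set
`⋂ i ∈ s, G i`. A point of `⋃ i, F i` lies in `F i₀` for some `i₀`, hence in every such clopen set
once `i₀ ∈ s`; a point outside `⋂ i, G i` misses some `G i₀`, hence every such clopen set once
`i₀ ∈ s`. -/

theorem Set.biUnion_subset_biInter_of_iUnion_eq_iInter {α ι : Type*} {F G : ι → Set α}
    (h : ⋃ i, F i = ⋂ i, G i) (s : Set ι) : ⋃ i ∈ s, F i ⊆ ⋂ i ∈ s, G i :=
  Set.iUnion₂_subset fun i _ => Set.subset_iInter₂ fun j _ =>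
    (Set.subset_iUnion F i).trans (h.subset.trans (Set.iInter_subset G j))

theorem Set.eventually_mem_iff_of_biUnion_subset_of_subset_biInter {α κ : Type*} {S : Set α}
    {F G : κ → Set α} {K : Finset κ → Set α} (hF : S = ⋃ i, F i) (hG : S = ⋂ i, G i)
    (hFK : ∀ s, ⋃ i ∈ s, F i ⊆ K s) (hKG : ∀ s, K s ⊆ ⋂ i ∈ s, G i) (x : α) :
    ∀ᶠ s in atTop, x ∈ K s ↔ x ∈ S := by
  by_cases hx : x ∈ S
  · obtain ⟨i, hi⟩ := Set.mem_iUnion.1 (hF ▸ hx)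
    filter_upwards [eventually_ge_atTop {i}] with s hs
    exact iff_of_true (hFK s (Set.mem_biUnion (hs (Finset.mem_singleton_self i)) hi)) hx
  · obtain ⟨i, hi⟩ : ∃ i, x ∉ G i := by simpa [hG] using hx
    filter_upwards [eventually_ge_atTop {i}] with s hs
    exact iff_of_false (fun hK => hi (Set.mem_iInter₂.1 (hKG s hK) i
      (hs (Finset.mem_singleton_self i)))) hx

theorem stmt1_general {X : Type*} [TopologicalSpace X] [CompactSpace X] [T2Space X]
    [TotallyDisconnectedSpace X] {κ : Type*}
    (f : X → Bool)
    (hF : ∃ F : κ → Set X, (∀ i, IsClosed (F i)) ∧ f ⁻¹' {true} = ⋃ i, F i)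
    (hG : ∃ G : κ → Set X, (∀ i, IsOpen (G i)) ∧ f ⁻¹' {true} = ⋂ i, G i) :
    ∃ g : Finset κ → X → Bool, (∀ i, Continuous (g i)) ∧
      (∀ i, IsClopen ((g i) ⁻¹' {true})) ∧
      ∀ x : X, Tendsto (fun i => g i x) atTop (nhds (f x)) := by
  obtain ⟨F, hFc, hFeq⟩ := hF
  obtain ⟨G, hGo, hGeq⟩ := hG
  choose K hK hFK hKG using fun s : Finset κ =>
    exists_clopen_of_closed_subset_open (isClosed_biUnion_finset fun i _ => hFc i)
      (isOpen_biInter_finset fun i _ => hGo i)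
      (Set.biUnion_subset_biInter_of_iUnion_eq_iInter (hFeq.symm.trans hGeq) ↑s)
  refine ⟨fun s => (K s).boolIndicator, fun s => (continuous_boolIndicator_iff_isClopen _).2 (hK s),
    fun s => (Set.preimage_boolIndicator_true (K s)).symm ▸ hK s,
    fun x => tendsto_nhds_of_eventually_eq ?_⟩
  filter_upwards [Set.eventually_mem_iff_of_biUnion_subset_of_subset_biInter hFeq hGeq hFK hKG x]
    with s hs
  exact Bool.eq_iff_iff.2 (((K s).mem_iff_boolIndicator x).symm.trans hs)

/-- If `X` is compact Hausdorff totally disconnected with a base of size at most `κ`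
and `f ⁻¹' {true}` is both a union of at most `κ` closed sets and an intersection of at most `κ`
open sets, then `f` is the limit along the filter `𝔉_κ` (i.e. `atTop` on finite subsets of `κ`)
of a family of continuous `Bool`-valued functions (indicators of clopen sets). -/
theorem stmt1 {X : Type*} [TopologicalSpace X] [CompactSpace X] [T2Space X]
    [TotallyDisconnectedSpace X] {κ : Type*} [Infinite κ]
    (B : κ → Set X) (hB : TopologicalSpace.IsTopologicalBasis (Set.range B))
    (f : X → Bool)
    (hF : ∃ F : κ → Set X, (∀ i, IsClosed (F i)) ∧ f ⁻¹' {true} = ⋃ i, F i)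
    (hG : ∃ G : κ → Set X, (∀ i, IsOpen (G i)) ∧ f ⁻¹' {true} = ⋂ i, G i) :
    ∃ g : Finset κ → X → Bool, (∀ i, Continuous (g i)) ∧
      (∀ i, IsClopen ((g i) ⁻¹' {true})) ∧
      ∀ x : X, Tendsto (fun i => g i x) atTop (nhds (f x)) :=
  stmt1_general f hF hG
end

section
/- Let X be a compact Hausdorff totally disconnected space with a countable base (equivalently, a Polish zero-dimensional compact space) and f : X → {0,1}. If for every nonempty closed F ⊆ X the restriction f|_F has the property that the set of points of F lying in both the closure of (f|_F)⁻¹(0) and the closure of (f|_F)⁻¹(1) (closures taken in F) has empty interior in F, then f⁻¹(1) is both an F_σ set and a G_δ set. -/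
/-!
Call `A` resolvable when every nonempty closed `F` has a nonempty relatively open piece on which
`A` is constant; `BaireDaggerR f` makes `f ⁻¹' {true}` resolvable, and complements of resolvable
sets are resolvable. In a hereditarily Lindelöf space whose open sets are `F_σ`, a resolvable `A`
is `F_σ`: the union `G` of all open `U` with `U ∩ A` and `U \ A` both `F_σ` is a countable such
union, so it has the same property; if `G ≠ univ`, some open `V` meets `Gᶜ` in a nonempty piece
lying in `A` or in `Aᶜ`, and then `V` has the property as well, contradicting `V ⊄ G`.
-/

open Filter Topology

/-- `f ∈ B^§(Y)`: the set `closure (f⁻¹(0)) ∩ closure (f⁻¹(1))` has empty interior. -/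
def BaireDagger {Y : Type*} [TopologicalSpace Y] (f : Y → Bool) : Prop :=
  interior (closure (f ⁻¹' {false}) ∩ closure (f ⁻¹' {true})) = ∅

/-- `f ∈ B^§_r(Y)`: the restriction of `f` to every nonempty closed subset `F` (with the subspace
topology) is in `B^§(F)`. -/
def BaireDaggerR {Y : Type*} [TopologicalSpace Y] (f : Y → Bool) : Prop :=
  ∀ F : Set Y, IsClosed F → F.Nonempty → BaireDagger (fun x : F => f x)

open Set

section

variable {X : Type*} [TopologicalSpace X]

def IsFσ (s : Set X) : Prop :=
  IsGδ sᶜ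

theorem isFσ_compl_iff {s : Set X} : IsFσ sᶜ ↔ IsGδ s := by
  rw [IsFσ, compl_compl]

theorem IsFσ.eq_iUnion_nat {s : Set X} (hs : IsFσ s) :
    ∃ F : ℕ → Set X, (∀ n, IsClosed (F n)) ∧ s = ⋃ n, F n := by
  obtain ⟨U, hU, hsU⟩ := hs.eq_iInter_nat
  exact ⟨fun n => (U n)ᶜ, fun n => (hU n).isClosed_compl, by
    rw [← compl_iInter, ← hsU, compl_compl]⟩

theorem IsClosed.isFσ {s : Set X} (hs : IsClosed s) : IsFσ s :=
  hs.isOpen_compl.isGδ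

theorem IsOpen.isFσ [PerfectlyNormalSpace X] {s : Set X} (hs : IsOpen s) : IsFσ s :=
  hs.isClosed_compl.isGδ

theorem IsFσ.union {s t : Set X} (hs : IsFσ s) (ht : IsFσ t) : IsFσ (s ∪ t) := by
  rw [IsFσ, compl_union]
  exact IsGδ.inter hs ht

theorem IsFσ.inter {s t : Set X} (hs : IsFσ s) (ht : IsFσ t) : IsFσ (s ∩ t) := by
  rw [IsFσ, compl_inter]
  exact IsGδ.union hs ht

theorem IsFσ.biUnion {ι : Type*} {I : Set ι} (hI : I.Countable) {s : ι → Set X}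
    (hs : ∀ i ∈ I, IsFσ (s i)) : IsFσ (⋃ i ∈ I, s i) := by
  rw [IsFσ, compl_iUnion₂]
  exact IsGδ.biInter hI hs

theorem isFσ_iUnion_inter_of_isOpen [HereditarilyLindelofSpace X] {ι : Type*} {U : ι → Set X}
    (hU : ∀ i, IsOpen (U i)) {B : Set X} (hUB : ∀ i, IsFσ (U i ∩ B)) :
    IsFσ ((⋃ i, U i) ∩ B) := by
  obtain ⟨I, hI, hIU⟩ := eq_open_union_countable U hU
  rw [← hIU, iUnion₂_inter]
  exact IsFσ.biUnion hI fun i _ => hUB i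

theorem IsFσ.inter_of_diff_subset {V G B : Set X} (hV : IsFσ V) (hG : IsOpen G)
    (hVG : V \ G ⊆ B) (hGB : IsFσ (G ∩ B)) : IsFσ (V ∩ B) := by
  have hsplit : V ∩ B = V \ G ∪ V ∩ (G ∩ B) := by
    ext x
    have := @hVG x
    simp only [mem_inter_iff, mem_union, Set.mem_sdiff] at this ⊢
    tauto
  rw [hsplit]
  exact (hV.inter hG.isClosed_compl.isFσ).union (hV.inter hGB)

theorem IsFσ.inter_compl_of_diff_subset {V G B : Set X} (hV : IsFσ V) (hVG : V \ G ⊆ B)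
    (hGB : IsFσ (G ∩ Bᶜ)) : IsFσ (V ∩ Bᶜ) := by
  have hVB : V ∩ Bᶜ = V ∩ (G ∩ Bᶜ) := by
    ext x
    have := @hVG x
    simp only [mem_inter_iff, mem_compl_iff, Set.mem_sdiff] at this ⊢
    tauto
  rw [hVB]
  exact hV.inter hGB

def IsResolvable (A : Set X) : Prop :=
  ∀ F : Set X, IsClosed F → F.Nonempty →
    ∃ V : Set X, IsOpen V ∧ (V ∩ F).Nonempty ∧ (V ∩ F ⊆ A ∨ V ∩ F ⊆ Aᶜ)

theorem IsResolvable.compl {A : Set X} (hA : IsResolvable A) : IsResolvable Aᶜ := by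
  intro F hF hne
  obtain ⟨V, hV, hVF, hsub⟩ := hA F hF hne
  exact ⟨V, hV, hVF, by rwa [compl_compl, or_comm]⟩

theorem IsResolvable.isFσ [HereditarilyLindelofSpace X] [PerfectlyNormalSpace X] {A : Set X}
    (hA : IsResolvable A) : IsFσ A := by
  let S := {U : Set X // IsOpen U ∧ IsFσ (U ∩ A) ∧ IsFσ (U ∩ Aᶜ)}
  set G := ⋃ U : S, (U : Set X)
  have hGopen : IsOpen G := isOpen_iUnion fun U => U.2.1
  have hGA : IsFσ (G ∩ A) := isFσ_iUnion_inter_of_isOpen (fun U => U.2.1) fun U => U.2.2.1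
  have hGAc : IsFσ (G ∩ Aᶜ) := isFσ_iUnion_inter_of_isOpen (fun U => U.2.1) fun U => U.2.2.2
  suffices hG : G = univ by rwa [hG, univ_inter] at hGA
  by_contra hG
  obtain ⟨V, hV, ⟨x, hxV, hxG⟩, hsub⟩ :=
    hA Gᶜ hGopen.isClosed_compl (nonempty_compl.mpr hG)
  have hVS : IsFσ (V ∩ A) ∧ IsFσ (V ∩ Aᶜ) := by
    rw [inter_comm, ← sdiff_eq_compl_inter] at hsub
    rcases hsub with hsub | hsub
    · exact ⟨hV.isFσ.inter_of_diff_subset hGopen hsub hGA,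
        hV.isFσ.inter_compl_of_diff_subset hsub hGAc⟩
    · have hGAcc : IsFσ (G ∩ Aᶜᶜ) := by rwa [compl_compl]
      exact ⟨by simpa only [compl_compl] using hV.isFσ.inter_compl_of_diff_subset hsub hGAcc,
        hV.isFσ.inter_of_diff_subset hGopen hsub hGAc⟩
  exact hxG (mem_iUnion.mpr ⟨⟨V, hV, hVS⟩, hxV⟩)

theorem exists_isOpen_forall_notMem_of_notMem_closure {F : Set X} {s : Set F} {x : F}
    (hx : x ∉ closure s) : ∃ V : Set X, IsOpen V ∧ (x : X) ∈ V ∧ ∀ y : F, (y : X) ∈ V → y ∉ s :=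
  ⟨(closure (Subtype.val '' s))ᶜ, isClosed_closure.isOpen_compl,
    fun hx' => hx (closure_subtype.mpr hx'),
    fun _ hyV hys => hyV (subset_closure (mem_image_of_mem _ hys))⟩

theorem BaireDaggerR.isResolvable {f : X → Bool} (hf : BaireDaggerR f) :
    IsResolvable (f ⁻¹' {true}) := by
  intro F hF hne
  let g : F → Bool := fun x => f x
  obtain ⟨x, hx⟩ : ∃ x : F, x ∉ closure (g ⁻¹' {false}) ∩ closure (g ⁻¹' {true}) := by
    by_contra! h
    have hempty := hf F hF hne
    rw [BaireDagger, eq_univ_of_forall h, interior_univ, univ_eq_empty_iff] at hempty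
    obtain ⟨y, hy⟩ := hne
    exact hempty.false ⟨y, hy⟩
  have hpiece : ∀ b, x ∉ closure (g ⁻¹' {b}) →
      ∃ V : Set X, IsOpen V ∧ (V ∩ F).Nonempty ∧ V ∩ F ⊆ (f ⁻¹' {b})ᶜ := by
    intro b hb
    obtain ⟨V, hV, hxV, hVs⟩ := exists_isOpen_forall_notMem_of_notMem_closure hb
    exact ⟨V, hV, ⟨x, hxV, x.2⟩, fun y hy => hVs ⟨y, hy.2⟩ hy.1⟩
  rcases not_and_or.mp hx with hx | hx
  · obtain ⟨V, hV, hVF, hsub⟩ := hpiece false hx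
    exact ⟨V, hV, hVF, Or.inl fun y hy => by simpa using hsub hy⟩
  · obtain ⟨V, hV, hVF, hsub⟩ := hpiece true hx
    exact ⟨V, hV, hVF, Or.inr hsub⟩

end

theorem stmt2_general {X : Type*} [TopologicalSpace X] [CompactSpace X] [T2Space X]
    [SecondCountableTopology X]
    (f : X → Bool) (hf : BaireDaggerR f) :
    (∃ F : ℕ → Set X, (∀ n, IsClosed (F n)) ∧ f ⁻¹' {true} = ⋃ n, F n) ∧
      IsGδ (f ⁻¹' {true}) :=
  -- compact Hausdorff and second countable: metrizable, hence perfectly normal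
  ⟨hf.isResolvable.isFσ.eq_iUnion_nat, isFσ_compl_iff.mp hf.isResolvable.compl.isFσ⟩

/-- on a compact Hausdorff totally disconnected second countable space,
if `f ∈ B^§_r(X)` then `f ⁻¹' {true}` is both `F_σ` and `G_δ`. -/
theorem stmt2 {X : Type*} [TopologicalSpace X] [CompactSpace X] [T2Space X]
    [TotallyDisconnectedSpace X] [SecondCountableTopology X]
    (f : X → Bool) (hf : BaireDaggerR f) :
    (∃ F : ℕ → Set X, (∀ n, IsClosed (F n)) ∧ f ⁻¹' {true} = ⋃ n, F n) ∧
      IsGδ (f ⁻¹' {true}) :=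
  stmt2_general f hf
end

section
/- Let X be a compact Hausdorff space and f : X → {0,1}. If f⁻¹(1) is both an F_σ and a G_δ subset of X, then for every nonempty closed F ⊆ X, the restriction f|_F has the property that closure_F((f|_F)⁻¹(0)) ∩ closure_F((f|_F)⁻¹(1)) has empty interior in F. -/
/-!
A set `s` that is both `F_σ` and `G_δ` splits the space into countably many closed pieces, each
contained in `s` or in `sᶜ`. No point of the frontier of `s` lies in the interior of such a
piece, while by the Baire category theorem these interiors are dense; so the frontier of `s`
has empty interior. Closed subspaces of a compact Hausdorff space are Baire, and both
hypotheses on `f ⁻¹' {true}` pass to them.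
-/

open Filter Topology

open Set

section

variable {Y : Type*} [TopologicalSpace Y]

theorem baireDagger_iff_interior_frontier (g : Y → Bool) :
    BaireDagger g ↔ interior (frontier (g ⁻¹' {true})) = ∅ := by
  rw [BaireDagger, frontier_eq_closure_inter_closure, ← preimage_compl, Bool.compl_singleton,
    Bool.not_true, inter_comm]

theorem interior_frontier_eq_empty_of_iUnion_isClosed [BaireSpace Y] {ι : Type*} [Countable ι]
    {s : Set Y} {C : ι → Set Y} (hC : ∀ i, IsClosed (C i)) (hcover : ⋃ i, C i = univ)
    (hsplit : ∀ i, C i ⊆ s ∨ C i ⊆ sᶜ) : interior (frontier s) = ∅ := by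
  rw [interior_eq_empty_iff_dense_compl]
  refine (dense_iUnion_interior_of_closed hC hcover).mono (iUnion_subset fun i => ?_)
  rw [subset_compl_iff_disjoint_right]
  rcases hsplit i with hs | hs
  · exact disjoint_interior_frontier.mono_left (interior_mono hs)
  · simpa only [frontier_compl] using disjoint_interior_frontier.mono_left (interior_mono hs)

theorem IsGδ.interior_frontier_eq_empty_of_eq_iUnion_isClosed [BaireSpace Y] {s : Set Y}
    (hGδ : IsGδ s) {C : ℕ → Set Y} (hC : ∀ n, IsClosed (C n)) (hs : s = ⋃ n, C n) :
    interior (frontier s) = ∅ := by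
  obtain ⟨U, hU, rfl⟩ := hGδ.eq_iInter_nat
  refine interior_frontier_eq_empty_of_iUnion_isClosed
    (C := Sum.elim C fun n => (U n)ᶜ) (Sum.forall.2 ⟨hC, fun n => (hU n).isClosed_compl⟩) ?_
    (Sum.forall.2 ⟨fun n => .inl ((subset_iUnion C n).trans hs.ge),
      fun n => .inr (compl_subset_compl.2 (iInter_subset U n))⟩)
  simp only [iUnion_sum, Sum.elim_inl, Sum.elim_inr]
  rw [← hs, ← compl_iInter, union_compl_self]

end

/-- on a compact Hausdorff space, if `f ⁻¹' {true}` is both `F_σ` and `G_δ`, then for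
every nonempty closed `F ⊆ X`, the restriction `f|_F` satisfies: the intersection of the closures
(in `F`) of `(f|_F)⁻¹(0)` and `(f|_F)⁻¹(1)` has empty interior in `F`. -/
theorem stmt3 {X : Type*} [TopologicalSpace X] [CompactSpace X] [T2Space X]
    (f : X → Bool)
    (hFσ : ∃ F : ℕ → Set X, (∀ n, IsClosed (F n)) ∧ f ⁻¹' {true} = ⋃ n, F n)
    (hGδ : IsGδ (f ⁻¹' {true})) :
    ∀ F : Set X, IsClosed F → F.Nonempty → BaireDagger (fun x : F => f x) := by
  intro F hF _
  have : CompactSpace F := isCompact_iff_compactSpace.mp hF.isCompact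
  obtain ⟨C, hC, hfC⟩ := hFσ
  rw [baireDagger_iff_interior_frontier]
  exact (hGδ.preimage continuous_subtype_val).interior_frontier_eq_empty_of_eq_iUnion_isClosed
    (fun n => (hC n).preimage continuous_subtype_val)
    (by rw [← preimage_iUnion, ← hfC])
end

section
/- Let X be a compact Hausdorff totally disconnected space with a base of size at most κ, and f : X → {0,1}. Suppose that for every nonempty closed F ⊆ X, the set closure_F((f|_F)⁻¹(0)) ∩ closure_F((f|_F)⁻¹(1)) has empty interior in F. Then f⁻¹(1) can be written as a union of at most κ closed subsets of X. -/
open Filter Topology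

/-!
Call `oscSet f F = cl (F ∩ f⁻¹ 0) ∩ cl (F ∩ f⁻¹ 1)` the oscillation set of `f` on `F`. The
hypothesis says that it is a proper closed subset of every nonempty closed `F`, so iterating it
transfinitely gives a strictly decreasing sequence of closed sets `G_α`, which must reach `∅`.
A point `x` with `f x = 1` leaves the sequence at some stage `α`, i.e. `x ∈ G_α` lies outside
`cl (G_α ∩ f⁻¹ 0)`; by regularity some basic `B i ∋ x` has closure disjoint from that set, so
`x ∈ cl (B i) ∩ G_{β i} ⊆ f⁻¹ 1`, where `β i` is the least ordinal for which this inclusion holds.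
-/

universe u

section OscSet

variable {X : Type u} [TopologicalSpace X] (f : X → Bool)

def oscSet (F : Set X) : Set X :=
  closure (F ∩ f ⁻¹' {false}) ∩ closure (F ∩ f ⁻¹' {true})

theorem isClosed_oscSet (F : Set X) : IsClosed (oscSet f F) :=
  isClosed_closure.inter isClosed_closure

theorem oscSet_subset {F : Set X} (hF : IsClosed F) : oscSet f F ⊆ F :=
  Set.inter_subset_left.trans (closure_minimal Set.inter_subset_left hF)

theorem notMem_closure_inter_false_of_notMem_oscSet {F : Set X} {x : X} (hxF : x ∈ F)
    (hx : f x = true) (hosc : x ∉ oscSet f F) : x ∉ closure (F ∩ f ⁻¹' {false}) :=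
  fun hcl => hosc ⟨hcl, subset_closure ⟨hxF, hx⟩⟩

theorem oscSet_ne_self_of_baireDagger {F : Set X} (hne : F.Nonempty)
    (hF : BaireDagger (fun x : F => f x)) : oscSet f F ≠ F := by
  intro hosc
  have hpre : ∀ b : Bool, closure ((fun x : F => f x) ⁻¹' {b})
      = (Subtype.val : F → X) ⁻¹' closure (F ∩ f ⁻¹' {b}) := fun b => by
    rw [IsEmbedding.subtypeVal.closure_eq_preimage_closure_image]
    exact congrArg _ (congrArg _ (Subtype.image_preimage_coe F (f ⁻¹' {b})))
  rw [BaireDagger, hpre, hpre, ← Set.preimage_inter, ← oscSet, hosc, Subtype.coe_preimage_self,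
    interior_univ, Set.univ_eq_empty_iff] at hF
  exact hF.false ⟨_, hne.some_mem⟩

noncomputable def oscSetIter (o : Ordinal.{u}) : Set X :=
  ⋂ o' : Set.Iio o, oscSet f (oscSetIter o'.1)
termination_by o
decreasing_by exact o'.2

theorem oscSetIter_eq (o : Ordinal.{u}) :
    oscSetIter f o = ⋂ o' : Set.Iio o, oscSet f (oscSetIter f o'.1) := by
  rw [oscSetIter]

theorem isClosed_oscSetIter (o : Ordinal.{u}) : IsClosed (oscSetIter f o) := by
  rw [oscSetIter_eq]
  exact isClosed_iInter fun _ => isClosed_oscSet f _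

theorem oscSetIter_subset_oscSet {o' o : Ordinal.{u}} (h : o' < o) :
    oscSetIter f o ⊆ oscSet f (oscSetIter f o') := by
  rw [oscSetIter_eq]
  exact Set.iInter_subset (fun o'' : Set.Iio o => oscSet f (oscSetIter f o''.1)) ⟨o', h⟩

theorem oscSetIter_antitone : Antitone (oscSetIter f) := by
  intro o₁ o₂ h
  rcases h.eq_or_lt with rfl | h
  · exact le_rfl
  · exact (oscSetIter_subset_oscSet f h).trans (oscSet_subset f (isClosed_oscSetIter f o₁))

theorem exists_mem_oscSetIter_notMem_oscSet {x : X} {o : Ordinal.{u}} (h : x ∉ oscSetIter f o) :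
    ∃ o', x ∈ oscSetIter f o' ∧ x ∉ oscSet f (oscSetIter f o') := by
  set S : Set Ordinal.{u} := {o | x ∉ oscSetIter f o}
  have hS : S.Nonempty := ⟨o, h⟩
  have hmin : x ∉ oscSetIter f (sInf S) := csInf_mem hS
  rw [oscSetIter_eq, Set.mem_iInter, not_forall] at hmin
  obtain ⟨⟨o', ho'⟩, hx⟩ := hmin
  exact ⟨o', by_contra fun hx' => (csInf_le' hx').not_gt (Set.mem_Iio.1 ho'), hx⟩

theorem exists_oscSetIter_eq_empty
    (hf : ∀ F : Set X, IsClosed F → F.Nonempty → oscSet f F ≠ F) :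
    ∃ o : Ordinal.{u}, oscSetIter f o = ∅ := by
  by_contra! hne
  have hanti : StrictAnti (oscSetIter f) := fun o₁ o₂ h =>
    (oscSetIter_subset_oscSet f h).trans_ssubset <|
      (oscSet_subset f (isClosed_oscSetIter f o₁)).ssubset_of_ne <|
        hf _ (isClosed_oscSetIter f o₁) (hne o₁)
  exact not_injective_of_ordinal _ hanti.injective

end OscSet

theorem exists_iUnion_isClosed_eq_preimage_true {X : Type u} [TopologicalSpace X] [RegularSpace X]
    {κ : Type*} (B : κ → Set X) (hB : TopologicalSpace.IsTopologicalBasis (Set.range B))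
    (f : X → Bool) (hf : ∀ F : Set X, IsClosed F → F.Nonempty → oscSet f F ≠ F) :
    ∃ F : κ → Set X, (∀ i, IsClosed (F i)) ∧ f ⁻¹' {true} = ⋃ i, F i := by
  obtain ⟨oₑ, hoₑ⟩ := exists_oscSetIter_eq_empty f hf
  set S : κ → Set Ordinal.{u} := fun i => {o | closure (B i) ∩ oscSetIter f o ⊆ f ⁻¹' {true}}
  have hS : ∀ i, (S i).Nonempty := fun i => ⟨oₑ, by simp [S, hoₑ]⟩
  refine ⟨fun i => closure (B i) ∩ oscSetIter f (sInf (S i)),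
    fun i => isClosed_closure.inter (isClosed_oscSetIter f _), subset_antisymm ?_ ?_⟩
  · intro x hx
    obtain ⟨o, hxG, hxosc⟩ :=
      exists_mem_oscSetIter_notMem_oscSet f (hoₑ ▸ Set.notMem_empty x : x ∉ oscSetIter f oₑ)
    have hU : (closure (oscSetIter f o ∩ f ⁻¹' {false}))ᶜ ∈ 𝓝 x :=
      isClosed_closure.isOpen_compl.mem_nhds
        (notMem_closure_inter_false_of_notMem_oscSet f hxG hx hxosc)
    obtain ⟨V, hV, hVc, hVU⟩ := exists_mem_nhds_isClosed_subset hU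
    obtain ⟨_, ⟨i, rfl⟩, hxB, hBV⟩ := hB.mem_nhds_iff.1 hV
    have hoS : o ∈ S i := by
      rintro y ⟨hyB, hyG⟩
      by_contra hy
      exact hVU (closure_minimal hBV hVc hyB)
        (subset_closure ⟨hyG, Bool.eq_false_iff.2 hy⟩)
    exact Set.mem_iUnion.2
      ⟨i, subset_closure hxB, oscSetIter_antitone f (csInf_le' hoS) hxG⟩
  · exact Set.iUnion_subset fun i => csInf_mem (hS i)

theorem stmt4_general {X : Type*} [TopologicalSpace X] [CompactSpace X] [T2Space X]
    {κ : Type*}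
    (B : κ → Set X) (hB : TopologicalSpace.IsTopologicalBasis (Set.range B))
    (f : X → Bool)
    (hf : ∀ F : Set X, IsClosed F → F.Nonempty → BaireDagger (fun x : F => f x)) :
    ∃ F : κ → Set X, (∀ i, IsClosed (F i)) ∧ f ⁻¹' {true} = ⋃ i, F i :=
  exists_iUnion_isClosed_eq_preimage_true B hB f fun F hF hne =>
    oscSet_ne_self_of_baireDagger f hne (hf F hF hne)

/-- `X` compact Hausdorff totally disconnected with a base of size at most `κ`.
If for every nonempty closed `F ⊆ X` the restriction `f|_F` is in `B^§(F)`, then `f ⁻¹' {true}`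
is a union of at most `κ` closed sets. -/
theorem stmt4 {X : Type*} [TopologicalSpace X] [CompactSpace X] [T2Space X]
    [TotallyDisconnectedSpace X] {κ : Type*} [Infinite κ]
    (B : κ → Set X) (hB : TopologicalSpace.IsTopologicalBasis (Set.range B))
    (f : X → Bool)
    (hf : ∀ F : Set X, IsClosed F → F.Nonempty → BaireDagger (fun x : F => f x)) :
    ∃ F : κ → Set X, (∀ i, IsClosed (F i)) ∧ f ⁻¹' {true} = ⋃ i, F i :=
  stmt4_general B hB f hf
end

section
/- Let π : L → K be a continuous surjection between compact Hausdorff spaces and f : K → {0,1} a function. If the composition f ∘ π belongs to B^§_r(L), then f belongs to B^§_r(K). -/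
open Filter Topology

/-!
Shrink `π⁻¹ F` to a minimal closed set `G` with `π '' G = F` (Zorn, using compactness of `L`).
The restriction `G → F` is then irreducible: every nonempty open subset of `G` contains the
preimage of a nonempty open subset of `F`. Pulling back along such a map preserves density
in open sets, so a nonempty open set inside both closures in `F` would pull back to one inside
both closures in `G`, contradicting `f ∘ π ∈ B^§(G)`.
-/

open Set Function

/-- For closed surjections this is equivalent to irreducibility: no proper closed subset of the
domain maps onto the codomain. -/
def IsIrreducibleMap {E A : Type*} [TopologicalSpace E] [TopologicalSpace A] (p : E → A) :
    Prop :=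
  ∀ V : Set E, IsOpen V → V.Nonempty → ∃ O : Set A, IsOpen O ∧ O.Nonempty ∧ p ⁻¹' O ⊆ V

section IrreducibleMap

variable {E A : Type*} [TopologicalSpace E] [TopologicalSpace A] {p : E → A}

lemma IsIrreducibleMap.preimage_subset_closure_preimage (hirr : IsIrreducibleMap p)
    (hps : Surjective p) (hpc : Continuous p) {W D : Set A} (hW : IsOpen W)
    (hWD : W ⊆ closure D) : p ⁻¹' W ⊆ closure (p ⁻¹' D) := by
  intro z hz
  rw [mem_closure_iff]
  intro V hV hzV
  obtain ⟨O, hO, hOne, hOV⟩ :=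
    hirr (V ∩ p ⁻¹' W) (hV.inter (hW.preimage hpc)) ⟨z, hzV, hz⟩
  have hOW : O ⊆ W := fun y hy => by
    obtain ⟨w, rfl⟩ := hps y
    exact (hOV hy).2
  obtain ⟨y, hy⟩ := hOne
  obtain ⟨a, haO, haD⟩ := mem_closure_iff.mp (hWD (hOW hy)) O hO hy
  obtain ⟨w, rfl⟩ := hps a
  exact ⟨w, (hOV haO).1, haD⟩

lemma IsIrreducibleMap.baireDagger_of_comp (hirr : IsIrreducibleMap p) (hps : Surjective p)
    (hpc : Continuous p) {g : A → Bool} (hg : BaireDagger (g ∘ p)) : BaireDagger g := by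
  set W := interior (closure (g ⁻¹' {false}) ∩ closure (g ⁻¹' {true}))
  have hpre : p ⁻¹' W ⊆ closure ((g ∘ p) ⁻¹' {false}) ∩ closure ((g ∘ p) ⁻¹' {true}) :=
    subset_inter
      (hirr.preimage_subset_closure_preimage hps hpc isOpen_interior
        (interior_subset.trans inter_subset_left))
      (hirr.preimage_subset_closure_preimage hps hpc isOpen_interior
        (interior_subset.trans inter_subset_right))
  have hempty : p ⁻¹' W ⊆ p ⁻¹' ∅ := by
    rw [preimage_empty, ← hg]
    exact interior_maximal hpre (isOpen_interior.preimage hpc)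
  exact subset_empty_iff.mp ((preimage_subset_preimage_iff fun y _ => hps y).mp hempty)

end IrreducibleMap

section MinimalClosed

variable {L K : Type*} [TopologicalSpace L] [TopologicalSpace K] {π : L → K}

lemma image_sInter_of_isChain [CompactSpace L] [T1Space K] (hπ : Continuous π)
    {c : Set (Set L)} (hchain : IsChain (· ⊆ ·) c) (hne : c.Nonempty)
    (hcl : ∀ s ∈ c, IsClosed s) {F : Set K} (himg : ∀ s ∈ c, π '' s = F) :
    π '' ⋂₀ c = F := by
  obtain ⟨s₀, hs₀⟩ := hne
  refine (image_mono (sInter_subset_of_mem hs₀)).trans_eq (himg s₀ hs₀) |>.antisymm ?_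
  intro y hy
  have : Nonempty c := ⟨⟨s₀, hs₀⟩⟩
  have hfibre : (⋂ s : c, (s : Set L) ∩ π ⁻¹' {y}).Nonempty := by
    refine IsCompact.nonempty_iInter_of_directed_nonempty_isCompact_isClosed _ ?_ ?_
      (fun s => ((hcl s s.2).inter (isClosed_singleton.preimage hπ)).isCompact)
      (fun s => (hcl s s.2).inter (isClosed_singleton.preimage hπ))
    · replace hchain : IsChain (· ⊇ ·) c := hchain.symm
      exact (directedOn_iff_directed.mp hchain.directedOn).mono_comp (g := (· ∩ π ⁻¹' {y})) _
        fun _ _ => inter_subset_inter_left _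
    · rintro ⟨s, hs⟩
      rw [← image_inter_nonempty_iff, himg s hs]
      exact ⟨y, hy, rfl⟩
  obtain ⟨z, hz⟩ := hfibre
  rw [mem_iInter] at hz
  exact ⟨z, mem_sInter.mpr fun s hs => (hz ⟨s, hs⟩).1, (hz ⟨s₀, hs₀⟩).2⟩

lemma exists_minimal_isClosed_image_eq [CompactSpace L] [T1Space K] (hπ : Continuous π)
    {F : Set K} (hFc : IsClosed F) (hF : F ⊆ range π) :
    ∃ G, Minimal (fun G : Set L => IsClosed G ∧ π '' G = F) G := by
  obtain ⟨G, -, hG⟩ := zorn_superset_nonempty {G : Set L | IsClosed G ∧ π '' G = F}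
    (fun c hc hchain hne => ⟨⋂₀ c,
      ⟨isClosed_sInter fun s hs => (hc hs).1,
        image_sInter_of_isChain hπ hchain hne (fun s hs => (hc hs).1) fun s hs => (hc hs).2⟩,
      fun _ => sInter_subset_of_mem⟩)
    (π ⁻¹' F) ⟨hFc.preimage hπ, image_preimage_eq_of_subset hF⟩
  exact ⟨G, hG⟩

lemma Minimal.isIrreducibleMap_restrict [CompactSpace L] [T2Space K] (hπ : Continuous π)
    {F : Set K} {G : Set L} (hG : Minimal (fun G : Set L => IsClosed G ∧ π '' G = F) G)
    (hmaps : MapsTo π G F) : IsIrreducibleMap hmaps.restrict := by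
  intro V hV hVne
  obtain ⟨V₀, hV₀, rfl⟩ := isOpen_induced_iff.mp hV
  set C := π '' (G \ V₀)
  have hCcl : IsClosed C := ((hG.prop.1.isCompact.diff hV₀).image hπ).isClosed
  have hFC : ¬ F ⊆ C := by
    intro hFC
    obtain ⟨⟨z, hzG⟩, hzV⟩ := hVne
    have hdiff : IsClosed (G \ V₀) ∧ π '' (G \ V₀) = F :=
      ⟨hG.prop.1.sdiff hV₀, (hG.prop.2 ▸ image_mono sdiff_subset).antisymm hFC⟩
    exact (hG.le_of_le hdiff sdiff_subset hzG).2 hzV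
  obtain ⟨y, hyF, hyC⟩ := not_subset.mp hFC
  refine ⟨Subtype.val ⁻¹' Cᶜ, hCcl.isOpen_compl.preimage continuous_subtype_val,
    ⟨⟨y, hyF⟩, hyC⟩, fun z hz => ?_⟩
  by_contra hzV
  exact hz ⟨z, ⟨z.2, hzV⟩, rfl⟩

end MinimalClosed

theorem stmt5_general {L K : Type*} [TopologicalSpace L] [CompactSpace L]
    [TopologicalSpace K] [T2Space K]
    (π : L → K) (hπc : Continuous π) (hπs : Function.Surjective π)
    (f : K → Bool) (hfp : BaireDaggerR (f ∘ π)) :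
    BaireDaggerR f := by
  intro F hFc hFne
  obtain ⟨G, hG⟩ := exists_minimal_isClosed_image_eq hπc hFc fun y _ => hπs y
  have hmaps : MapsTo π G F := hG.prop.2 ▸ mapsTo_image π G
  have hsurj : Surjective hmaps.restrict :=
    hmaps.restrict_surjective_iff.mpr (hG.prop.2 ▸ surjOn_image π G)
  have hGne : G.Nonempty := (hG.prop.2 ▸ hFne : (π '' G).Nonempty).of_image
  exact (hG.isIrreducibleMap_restrict hπc hmaps).baireDagger_of_comp hsurj
    (hπc.restrict hmaps) (hfp G hG.prop.1 hGne)

/-- if `π : L → K` is a continuous surjection between compact Hausdorff spaces and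
`f ∘ π ∈ B^§_r(L)`, then `f ∈ B^§_r(K)`. -/
theorem stmt5 {L K : Type*} [TopologicalSpace L] [CompactSpace L] [T2Space L]
    [TopologicalSpace K] [CompactSpace K] [T2Space K]
    (π : L → K) (hπc : Continuous π) (hπs : Function.Surjective π)
    (f : K → Bool) (hfp : BaireDaggerR (f ∘ π)) :
    BaireDaggerR f :=
  stmt5_general π hπc hπs f hfp
end

section
/- Let X be a compact Hausdorff space in which every point is in the closure of both f⁻¹(0) and f⁻¹(1) for some f : X → {0,1} (i.e., closure(f⁻¹(0)) = closure(f⁻¹(1)) = X). Then f does not belong to B^§(X). Conversely, if f ∉ B^§(X), then there exists a nonempty closed subspace X' ⊆ X such that closure_{X'}((f|_{X'})⁻¹(0)) = closure_{X'}((f|_{X'})⁻¹(1)) = X'. -/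
open Filter Topology

lemma IsOpen.closure_subset_closure_inter {X : Type*} [TopologicalSpace X] {U s : Set X}
    (hU : IsOpen U) (h : U ⊆ closure s) : closure U ⊆ closure (U ∩ s) :=
  closure_minimal (fun _ hx => hU.inter_closure ⟨hx, h hx⟩) isClosed_closure

lemma IsOpen.dense_preimage_val_closure {X : Type*} [TopologicalSpace X] {U s : Set X}
    (hU : IsOpen U) (h : U ⊆ closure s) : Dense ((↑) ⁻¹' s : Set (closure U)) := by
  rw [Subtype.dense_iff, Subtype.image_preimage_coe]
  exact (hU.closure_subset_closure_inter h).trans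
    (closure_mono (Set.inter_subset_inter_left s subset_closure))

lemma not_baireDagger_of_dense {Y : Type*} [TopologicalSpace Y] [Nonempty Y] {f : Y → Bool}
    (h₀ : Dense (f ⁻¹' {false})) (h₁ : Dense (f ⁻¹' {true})) : ¬ BaireDagger f := by
  rw [BaireDagger, h₀.closure_eq, h₁.closure_eq, Set.univ_inter, interior_univ]
  exact Set.univ_nonempty.ne_empty

theorem stmt8_general {X : Type*} [TopologicalSpace X] [Nonempty X]
    (f : X → Bool) :
    ((closure (f ⁻¹' {false}) = Set.univ ∧ closure (f ⁻¹' {true}) = Set.univ) →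
      ¬ BaireDagger f) ∧
    (¬ BaireDagger f →
      ∃ X' : Set X, IsClosed X' ∧ X'.Nonempty ∧
        closure ((fun x : X' => f x) ⁻¹' {false}) = Set.univ ∧
        closure ((fun x : X' => f x) ⁻¹' {true}) = Set.univ) := by
  refine ⟨fun ⟨h₀, h₁⟩ =>
    not_baireDagger_of_dense (dense_iff_closure_eq.2 h₀) (dense_iff_closure_eq.2 h₁), fun hB => ?_⟩
  set U := interior (closure (f ⁻¹' {false}) ∩ closure (f ⁻¹' {true}))
  have hU : U.Nonempty := Set.nonempty_iff_ne_empty.2 hB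
  refine ⟨closure U, isClosed_closure, hU.closure, ?_, ?_⟩
  · exact (isOpen_interior.dense_preimage_val_closure
      (interior_subset.trans Set.inter_subset_left)).closure_eq
  · exact (isOpen_interior.dense_preimage_val_closure
      (interior_subset.trans Set.inter_subset_right)).closure_eq

/-- on a nonempty compact Hausdorff space `X`:
(a) if `closure (f⁻¹(0)) = closure (f⁻¹(1)) = X` then `f ∉ B^§(X)`; and conversely
(b) if `f ∉ B^§(X)` then there is a nonempty closed subspace `X' ⊆ X` on which the restriction of
`f` has both `closure ((f|_{X'})⁻¹(0)) = X'` and `closure ((f|_{X'})⁻¹(1)) = X'`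
(closures in the subspace topology). -/
theorem stmt8 {X : Type*} [TopologicalSpace X] [CompactSpace X] [T2Space X] [Nonempty X]
    (f : X → Bool) :
    ((closure (f ⁻¹' {false}) = Set.univ ∧ closure (f ⁻¹' {true}) = Set.univ) →
      ¬ BaireDagger f) ∧
    (¬ BaireDagger f →
      ∃ X' : Set X, IsClosed X' ∧ X'.Nonempty ∧
        closure ((fun x : X' => f x) ⁻¹' {false}) = Set.univ ∧
        closure ((fun x : X' => f x) ⁻¹' {true}) = Set.univ) :=
  stmt8_general f
end
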